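/- Let z = z_1⋯z_ℓ be a word over an alphabet A. For any word w over A, the q-Parikh matrix P_z(w) is upper unitriangular, and for all 1 ≤ i ≤ ℓ−r+1 and 1 ≤ r ≤ ℓ, its entry at position (i, i+r) equals q^{s(r−1)} · (w choose z_i z_{i+1}⋯z_{i+r−1})_q, where s(m) = m(m+1)/2. -/

import Mathlib

open Polynomial

/-- q-binomial on reversed words: first list = word with rightmost letter first,
matching the recursion (ua choose vb)_q = (u choose vb)_q * q^{|vb|} + [a=b](u choose v)_q. -/
noncomputable def qBaux {α : Type*} [DecidableEq α] : List α → List α → Polynomial ℕ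
  | _, [] => 1
  | [], _ :: _ => 0
  | a :: u, b :: v =>
      qBaux u (b :: v) * X ^ (v.length + 1) + if a = b then qBaux u v else 0

/-- q-binomial coefficient of words `u`, `v` given in natural reading order. -/
noncomputable def qB {α : Type*} [DecidableEq α] (u v : List α) : Polynomial ℕ :=
  qBaux u.reverse v.reverse

/-- The matrix M_{d,j}: identity plus q^j at positions (i,i+1) (0-based) where z_{i+1} = d. -/
noncomputable def entryM {α : Type*} [DecidableEq α] (n : ℕ) (z : List α) (d : α) (j : ℕ) :
    Matrix (Fin (n+1)) (Fin (n+1)) (Polynomial ℕ) :=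
  Matrix.of fun i i' =>
    if i = i' then 1
    else if (i' : ℕ) = (i : ℕ) + 1 ∧ z[(i : ℕ)]? = some d then X ^ j else 0

/-- The q-Parikh matrix of the word w = w_m ⋯ w_0 (natural reading order) induced by z:
P_z(w) = M_{w_m,m} ⋯ M_{w_0,0}. -/
noncomputable def Pm {α : Type*} [DecidableEq α] (n : ℕ) (z : List α) :
    List α → Matrix (Fin (n+1)) (Fin (n+1)) (Polynomial ℕ)
  | [] => 1
  | a :: t => entryM n z a t.length * Pm n z t

/-- s(m) = m(m+1)/2, the sum of the first m positive integers. -/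
def sfun (m : ℕ) : ℕ := m * (m + 1) / 2

/-!
Prepending a letter `a` to `w` multiplies `P_z(w)` on the left by `M_{a,|w|}`, which adds
`q^{|w|}` times row `i + 1` to row `i` whenever `z_i = a`. On the other side, unfolding the
defining recursion of the q-binomial from the right yields its recursion on first letters,
`(a u choose b v)_q = (u choose b v)_q + [a = b] q^{|u| - |v|} (u choose v)_q`. Both recursions
have the same shape, so the entry formula follows by induction on `w`; the powers of `q` match
because `s(r) = s(r - 1) + r`.
-/

section QBinomial

variable {α : Type*} [DecidableEq α]

@[simp]
lemma qBaux_nil_right (u : List α) : qBaux u [] = 1 := by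
  cases u <;> rfl

lemma qBaux_eq_zero_of_length_lt {u v : List α} (h : u.length < v.length) : qBaux u v = 0 := by
  induction u generalizing v with
  | nil =>
    cases v with
    | nil => simp at h
    | cons b v => rfl
  | cons a u ih =>
    cases v with
    | nil => simp at h
    | cons b v =>
      simp only [List.length_cons] at h
      simp [qBaux, ih (v := b :: v) (by simp only [List.length_cons]; omega),
        ih (v := v) (by omega)]

/-- Truncated exponents such as `|u| - |v|` are harmless: `(u choose v)_q = 0` when `|u| < |v|`. -/
lemma X_pow_mul_qBaux_congr {u v : List α} {m n : ℕ} (h : v.length ≤ u.length → m = n) :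
    X ^ m * qBaux u v = X ^ n * qBaux u v := by
  by_cases hl : v.length ≤ u.length
  · rw [h hl]
  · simp [qBaux_eq_zero_of_length_lt (not_le.mp hl)]

lemma qBaux_append_singleton (a b : α) (u v : List α) :
    qBaux (u ++ [a]) (v ++ [b]) =
      qBaux u (v ++ [b]) + if a = b then X ^ (u.length - v.length) * qBaux u v else 0 := by
  induction u generalizing v with
  | nil =>
    cases v with
    | nil => simp [qBaux]
    | cons d v => simp [qBaux, qBaux_eq_zero_of_length_lt]
  | cons c u ih =>
    cases v with
    | nil =>
      simp only [List.nil_append, List.cons_append, qBaux, qBaux_nil_right]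
      rw [← List.nil_append [b], ih]
      simp only [List.nil_append, List.length_cons, List.length_nil, Nat.sub_zero, qBaux_nil_right,
        mul_one, pow_succ]
      split_ifs <;> ring
    | cons d v =>
      have hpow : X ^ (u.length - (v.length + 1)) * qBaux u (d :: v) * X ^ (v.length + 2) =
          X ^ (u.length - v.length) * (qBaux u (d :: v) * X ^ (v.length + 1)) := by
        rw [mul_right_comm, ← pow_add, mul_comm _ (X ^ _), ← mul_assoc, ← pow_add]
        exact X_pow_mul_qBaux_congr fun h => by simp only [List.length_cons] at h; omega
      have ih' := ih (d :: v)
      simp only [List.cons_append, List.length_cons] at ih'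
      simp only [List.cons_append, qBaux, List.length_append, List.length_cons, List.length_nil,
        ih', ih v, Nat.add_sub_add_right]
      split_ifs <;> simp only [add_zero, add_mul, hpow]
      all_goals ring

@[simp]
lemma qB_nil_right (u : List α) : qB u [] = 1 :=
  qBaux_nil_right _

lemma qB_eq_zero_of_length_lt {u v : List α} (h : u.length < v.length) : qB u v = 0 :=
  qBaux_eq_zero_of_length_lt (by simpa using h)

lemma X_pow_mul_qB_congr {u v : List α} {m n : ℕ} (h : v.length ≤ u.length → m = n) :
    X ^ m * qB u v = X ^ n * qB u v :=
  X_pow_mul_qBaux_congr (by simpa using h)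

lemma qB_cons_cons (a b : α) (u v : List α) :
    qB (a :: u) (b :: v) =
      qB u (b :: v) + if a = b then X ^ (u.length - v.length) * qB u v else 0 := by
  simp [qB, qBaux_append_singleton]

lemma sfun_sub_one_add (r : ℕ) : sfun (r - 1) + r = sfun r := by
  cases r with
  | zero => rfl
  | succ r =>
    rw [sfun, sfun, Nat.add_sub_cancel,
      show (r + 1) * (r + 1 + 1) = r * (r + 1) + (r + 1) * 2 by ring,
      Nat.add_mul_div_right _ _ two_pos]

lemma X_pow_sfun_mul_qB_cons_cons (a b : α) (u v : List α) :
    X ^ sfun v.length * qB (a :: u) (b :: v) =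
      X ^ sfun v.length * qB u (b :: v) +
        if a = b then X ^ u.length * (X ^ sfun (v.length - 1) * qB u v) else 0 := by
  rw [qB_cons_cons, mul_add]
  split_ifs
  · rw [← mul_assoc, ← mul_assoc, ← pow_add, ← pow_add]
    exact congrArg _ (X_pow_mul_qB_congr fun h => by have := sfun_sub_one_add v.length; omega)
  · rw [mul_zero]

end QBinomial

lemma List.take_succ_drop_eq_getElem_cons {α : Type*} (l : List α) {i : ℕ} (hi : i < l.length)
    (r : ℕ) : (l.drop i).take (r + 1) = l[i] :: (l.drop (i + 1)).take r := by
  rw [List.drop_eq_getElem_cons hi, List.take_succ_cons]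

section QParikh

variable {α : Type*} [DecidableEq α] (n : ℕ) (z : List α)

lemma entryM_castSucc_apply (a : α) (j : ℕ) (i : Fin n) (k : Fin (n + 1)) :
    entryM n z a j i.castSucc k =
      (if i.castSucc = k then 1 else 0) +
        if i.succ = k ∧ z[(i : ℕ)]? = some a then X ^ j else 0 := by
  by_cases h : i.castSucc = k
  · subst h
    simp [entryM, Fin.ext_iff]
  · have h' : (i : ℕ) ≠ k := fun e => h (Fin.ext e)
    simp [entryM, h, h', Fin.ext_iff, eq_comm (a := (k : ℕ))]

lemma entryM_last_apply (a : α) (j : ℕ) (k : Fin (n + 1)) :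
    entryM n z a j (Fin.last n) k = if Fin.last n = k then 1 else 0 := by
  have : (k : ℕ) ≠ n + 1 := by omega
  simp [entryM, this]

lemma Pm_cons_apply_castSucc (a : α) (t : List α) (i : Fin n) (k : Fin (n + 1)) :
    Pm n z (a :: t) i.castSucc k =
      Pm n z t i.castSucc k +
        if z[(i : ℕ)]? = some a then X ^ t.length * Pm n z t i.succ k else 0 := by
  rw [Pm, Matrix.mul_apply]
  simp only [entryM_castSucc_apply, add_mul, Finset.sum_add_distrib, ite_mul, one_mul, zero_mul,
    Finset.sum_ite_eq, Finset.mem_univ, if_true]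
  split_ifs with h <;> simp [h]

lemma Pm_cons_apply_last (a : α) (t : List α) (k : Fin (n + 1)) :
    Pm n z (a :: t) (Fin.last n) k = Pm n z t (Fin.last n) k := by
  simp [Pm, Matrix.mul_apply, entryM_last_apply]

lemma Pm_apply_of_lt (w : List α) {i j : Fin (n + 1)} (h : j < i) : Pm n z w i j = 0 := by
  induction w generalizing i with
  | nil => exact Matrix.one_apply_ne h.ne'
  | cons a t ih =>
    cases i using Fin.lastCases with
    | last => rw [Pm_cons_apply_last, ih h]
    | cast i =>
      rw [Pm_cons_apply_castSucc, ih h, ih (h.trans Fin.castSucc_lt_succ)]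
      simp

lemma Pm_apply_of_le (w : List α) {i j : Fin (z.length + 1)} (h : i ≤ j) :
    Pm z.length z w i j = X ^ sfun (j - i - 1) * qB w ((z.drop i).take (j - i)) := by
  induction w generalizing i with
  | nil =>
    rcases h.eq_or_lt with rfl | hlt
    · simp [Pm, sfun]
    · rw [Pm, Matrix.one_apply_ne hlt.ne, qB_eq_zero_of_length_lt, mul_zero]
      simp only [List.length_nil, List.length_take, List.length_drop]
      omega
  | cons a t ih =>
    cases i using Fin.lastCases with
    | last =>
      obtain rfl : j = Fin.last _ := Fin.last_le_iff.mp h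
      rw [Pm_cons_apply_last, ih le_rfl]
      simp
    | cast i =>
      rw [Pm_cons_apply_castSucc, ih h]
      rcases h.eq_or_lt with h | hlt
      · rw [← h, Pm_apply_of_lt _ _ _ Fin.castSucc_lt_succ]
        simp
      · have hij : (i : ℕ) < j := hlt
        have hj : (j : ℕ) ≤ z.length := Nat.lt_succ_iff.mp j.isLt
        obtain ⟨r, hr⟩ : ∃ r, (j : ℕ) - i = r + 1 := ⟨j - i - 1, by omega⟩
        have hlen : ((z.drop (i + 1)).take r).length = r := by
          simp only [List.length_take, List.length_drop]
          omega
        rw [ih (Fin.castSucc_lt_iff_succ_le.mp hlt)]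
        simp only [Fin.val_castSucc, Fin.val_succ, Nat.sub_add_eq, hr, Nat.add_sub_cancel,
          List.take_succ_drop_eq_getElem_cons z i.isLt, List.getElem?_eq_getElem i.isLt,
          Option.some_inj, eq_comm (a := z[(i : ℕ)])]
        have hrec := X_pow_sfun_mul_qB_cons_cons a z[(i : ℕ)] t ((z.drop (i + 1)).take r)
        rw [hlen] at hrec
        exact hrec.symm

end QParikh

theorem stmt3_general {α : Type*} [DecidableEq α] (z w : List α) :
    (∀ i j : Fin (z.length + 1), j < i → Pm z.length z w i j = 0) ∧
    (∀ i : Fin (z.length + 1), Pm z.length z w i i = 1) ∧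
    (∀ i j : Fin (z.length + 1), i < j →
      Pm z.length z w i j =
        X ^ sfun ((j : ℕ) - (i : ℕ) - 1) *
          qB w ((z.drop (i : ℕ)).take ((j : ℕ) - (i : ℕ)))) :=
  ⟨fun _ _ => Pm_apply_of_lt _ z w,
    fun i => by simpa [sfun] using Pm_apply_of_le z w (le_refl i),
    fun _ _ h => Pm_apply_of_le z w h.le⟩

/-- The q-Parikh matrix is upper unitriangular and its (i, i+r) entry is
q^{s(r-1)} (w choose z_i ⋯ z_{i+r-1})_q. -/
theorem stmt3 {α : Type*} [DecidableEq α] (z w : List α) (hw : ∀ a ∈ w, a ∈ z) :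
    (∀ i j : Fin (z.length + 1), j < i → Pm z.length z w i j = 0) ∧
    (∀ i : Fin (z.length + 1), Pm z.length z w i i = 1) ∧
    (∀ i j : Fin (z.length + 1), i < j →
      Pm z.length z w i j =
        X ^ sfun ((j : ℕ) - (i : ℕ) - 1) *
          qB w ((z.drop (i : ℕ)).take ((j : ℕ) - (i : ℕ)))) :=
  stmt3_general z w
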